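/- arXiv:1411.6232 — 3 statements merged into one kernel-verified Lean document; each statement's English description precedes it below -/
import Mathlib

section
/- Let W, W' ∈ ℝ^{d×c} be matrices such that every row of W' is nonzero. Define D as the diagonal matrix with D_{ii} = 1/(2‖w'^i‖₂) for all i, where w'^i is the i-th row of W'. Then ‖W‖_{2,1} - Tr(W^T D W) ≤ ‖W'‖_{2,1} - Tr(W'^T D W'), where ‖·‖_{2,1} is the sum of Euclidean row norms. -/
open Matrix

noncomputable def l21Norm {d c : ℕ} (M : Matrix (Fin d) (Fin c) ℝ) : ℝ :=
  ∑ i, Real.sqrt (∑ j, (M i j) ^ 2)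

lemma trace_diag {d c : ℕ} (M : Matrix (Fin d) (Fin c) ℝ) (f : Fin d → ℝ) :
    (Mᵀ * Matrix.diagonal f * M).trace = ∑ i, f i * ∑ j, (M i j) ^ 2 := by
  simp only [Matrix.trace, Matrix.diag, Matrix.mul_apply, Matrix.diagonal_apply,
    Matrix.transpose_apply]
  rw [Finset.sum_comm]
  congr 1
  ext i
  rw [Finset.mul_sum]
  congr 1
  ext k
  rw [Finset.sum_eq_single i]
  · simp; ring
  · intro b _ hb; simp [hb]
  · simp

theorem l21_minus_quadratic_inequality {d c : ℕ}
    (W W' : Matrix (Fin d) (Fin c) ℝ)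
    (hW' : ∀ i, Real.sqrt (∑ j, (W' i j) ^ 2) ≠ 0)
    (D : Matrix (Fin d) (Fin d) ℝ)
    (hD : D = Matrix.diagonal (fun i => 1 / (2 * Real.sqrt (∑ j, (W' i j) ^ 2)))) :
    l21Norm W - (Wᵀ * D * W).trace ≤ l21Norm W' - (W'ᵀ * D * W').trace := by
  subst hD
  rw [trace_diag, trace_diag]
  unfold l21Norm
  rw [← Finset.sum_sub_distrib, ← Finset.sum_sub_distrib]
  apply Finset.sum_le_sum
  intro i _
  set b := Real.sqrt (∑ j, (W' i j) ^ 2) with hb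
  set a := Real.sqrt (∑ j, (W i j) ^ 2) with ha
  have hbpos : 0 < b := lt_of_le_of_ne (Real.sqrt_nonneg _) (Ne.symm (hW' i))
  have ha2 : a ^ 2 = ∑ j, (W i j) ^ 2 := by
    rw [ha, Real.sq_sqrt]; positivity
  have hb2 : b ^ 2 = ∑ j, (W' i j) ^ 2 := by
    rw [hb, Real.sq_sqrt]; positivity
  have hann : 0 ≤ a := Real.sqrt_nonneg _
  rw [← ha2, ← hb2]
  have h2b : (0:ℝ) < 2 * b := by positivity
  rw [div_mul_eq_mul_div, div_mul_eq_mul_div, sub_le_sub_iff, ← sub_nonneg]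
  have : b + 1 * a ^ 2 / (2 * b) - (a + 1 * b ^ 2 / (2 * b)) = (a - b) ^ 2 / (2 * b) := by
    field_simp; ring
  rw [this]; positivity
end

section
/- Let A, B be d×d real symmetric positive definite matrices. Then (1/2)Tr(A B^{-1/2}) - Tr(A^{1/2}) ≥ (1/2)Tr(B B^{-1/2}) - Tr(B^{1/2}), i.e., (1/2)Tr(A B^{-1/2}) - Tr(A^{1/2}) ≥ -(1/2)Tr(B^{1/2}). -/
open Matrix
section OldSqrt
open scoped ComplexOrder
noncomputable def Matrix.PosSemidef.sqrt {n : Type*} [Fintype n] [DecidableEq n]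
    {𝕜 : Type*} [RCLike 𝕜] {A : Matrix n n 𝕜} (hA : A.PosSemidef) : Matrix n n 𝕜 :=
  hA.1.eigenvectorUnitary.1 * diagonal ((↑) ∘ (√·) ∘ hA.1.eigenvalues) *
  (star hA.1.eigenvectorUnitary : Matrix n n 𝕜)
end OldSqrt

lemma Matrix.PosSemidef.posSemidef_sqrt {n : Type*} [Fintype n] [DecidableEq n]
    {A : Matrix n n ℝ} (hA : A.PosSemidef) : hA.sqrt.PosSemidef := by
  unfold Matrix.PosSemidef.sqrt
  rw [star_eq_conjTranspose]
  refine PosSemidef.mul_mul_conjTranspose_same ?_ _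
  rw [posSemidef_diagonal_iff]
  intro i
  simp [Real.sqrt_nonneg]

lemma Matrix.PosSemidef.sqrt_mul_self {n : Type*} [Fintype n] [DecidableEq n]
    {A : Matrix n n ℝ} (hA : A.PosSemidef) : hA.sqrt * hA.sqrt = A := by
  unfold Matrix.PosSemidef.sqrt
  have hU : (star hA.1.eigenvectorUnitary : Matrix n n ℝ) * hA.1.eigenvectorUnitary.1 = 1 :=
    Unitary.coe_star_mul_self _
  conv_rhs => rw [hA.1.spectral_theorem, Unitary.conjStarAlgAut_apply]
  rw [show ∀ U D V : Matrix n n ℝ, U * D * V * (U * D * V) = U * (D * (V * U) * D) * V by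
    intros; simp only [Matrix.mul_assoc], hU, Matrix.mul_one, diagonal_mul_diagonal]
  congr 3
  funext i
  simp [Real.mul_self_sqrt (hA.eigenvalues_nonneg i)]

lemma psd_trace_nonneg {d : ℕ} {M : Matrix (Fin d) (Fin d) ℝ}
    (hM : M.PosSemidef) : 0 ≤ M.trace := by
  rw [Matrix.trace]
  apply Finset.sum_nonneg
  intro i _
  have := hM.2 (Finsupp.single i 1)
  simpa [Matrix.diag] using this

theorem trace_sqrt_inequality {d : ℕ}
    (A B : Matrix (Fin d) (Fin d) ℝ) (hA : A.PosDef) (hB : B.PosDef) :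
    (hA.posSemidef.sqrt).trace - (1 / 2 : ℝ) * (A * (hB.posSemidef.sqrt)⁻¹).trace ≤
      (1 / 2 : ℝ) * (hB.posSemidef.sqrt).trace := by
  set S := hA.posSemidef.sqrt with hS
  set C := hB.posSemidef.sqrt with hC
  have hSpsd : S.PosSemidef := hA.posSemidef.posSemidef_sqrt
  have hCpsd : C.PosSemidef := hB.posSemidef.posSemidef_sqrt
  have hCinv : C⁻¹.PosSemidef := hCpsd.inv
  have hSS : S * S = A := hA.posSemidef.sqrt_mul_self
  have hCC : C * C = B := hB.posSemidef.sqrt_mul_self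
  -- C is invertible
  have hCdet : IsUnit C.det := by
    have h2 : C.det * C.det = B.det := by rw [← det_mul, hCC]
    have : C.det ≠ 0 := by
      intro h
      rw [h, mul_zero] at h2
      exact hB.det_pos.ne' h2.symm
    exact this.isUnit
  -- key PSD matrix: (S - C)ᵀ C⁻¹ (S - C)
  have hkey : ((S - C)ᴴ * C⁻¹ * (S - C)).PosSemidef :=
    hCinv.conjTranspose_mul_mul_same (S - C)
  have htr : 0 ≤ ((S - C)ᴴ * C⁻¹ * (S - C)).trace := psd_trace_nonneg hkey
  have hSC : (S - C)ᴴ = S - C := by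
    rw [conjTranspose_sub, hSpsd.1, hCpsd.1]
  rw [hSC] at htr
  -- expand the trace
  have hexp : ((S - C) * C⁻¹ * (S - C)).trace
      = (S * C⁻¹ * S).trace - 2 * S.trace + C.trace := by
    have h1 : (S - C) * C⁻¹ * (S - C)
        = S * C⁻¹ * S - S * C⁻¹ * C - C * C⁻¹ * S + C * C⁻¹ * C := by
      noncomm_ring
    rw [h1, Matrix.nonsing_inv_mul_cancel_right _ _ hCdet,
      Matrix.mul_nonsing_inv _ hCdet, one_mul, one_mul]
    rw [trace_add, trace_sub, trace_sub]
    ring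
  rw [hexp] at htr
  -- relate Tr(S C⁻¹ S) to Tr(A C⁻¹)
  have hcyc : (S * C⁻¹ * S).trace = (A * C⁻¹).trace := by
    rw [trace_mul_comm, ← Matrix.mul_assoc, hSS, trace_mul_comm]
  rw [hcyc] at htr
  linarith
end

section
/- Let H be the n×n centering matrix and P = (αβ H + U + L)^{-1} with α, β > 0, U diagonal positive definite, L symmetric PSD. Then the matrix H(I - αβ P)H is symmetric positive semidefinite. -/
/-!
Write `c = αβ`, `H` for the centering matrix and `M = cH + U + L`, which is positive definite.
Since `H² = H`, the matrix in question is `H - H (c⁻¹M)⁻¹ H`, and `0 ⪯ H ⪯ c⁻¹M`.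
For `0 ⪯ B ⪯ A` with `A ≻ 0`, the matrix `B - B A⁻¹ B` is the Schur complement of `A` in
`[[A, B], [B, B]] = [I 0]ᴴ (A - B) [I 0] + [I I]ᴴ B [I I] ⪰ 0`.
-/

open Matrix

noncomputable def centeringMatrix (n : ℕ) : Matrix (Fin n) (Fin n) ℝ :=
  1 - (n : ℝ)⁻¹ • Matrix.of (fun _ _ => (1 : ℝ))

open scoped ComplexOrder

namespace Matrix

variable {m 𝕜 : Type*} [Fintype m] [DecidableEq m] [RCLike 𝕜]

theorem PosDef.posSemidef_sub_mul_inv_mul {A B : Matrix m m 𝕜} (hA : A.PosDef)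
    (hB : B.PosSemidef) (hBA : (A - B).PosSemidef) : (B - B * A⁻¹ * B).PosSemidef := by
  have hpsd := (hBA.conjTranspose_mul_mul_same (fromCols 1 0 : Matrix m (m ⊕ m) 𝕜)).add
    (hB.conjTranspose_mul_mul_same (fromCols 1 1 : Matrix m (m ⊕ m) 𝕜))
  simp only [conjTranspose_fromCols_eq_fromRows_conjTranspose, fromRows_mul, mul_fromCols,
    fromCols_fromRows_eq_fromBlocks, fromBlocks_add, conjTranspose_one, conjTranspose_zero, zero_mul,
    mul_zero, one_mul, mul_one, sub_add_cancel, zero_add] at hpsd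
  let _ := hA.isUnit.invertible
  simpa only [hB.1.eq] using (hA.fromBlocks₁₁ B B).mp (by rwa [hB.1.eq])

end Matrix

theorem centeringMatrix_isHermitian (n : ℕ) : (centeringMatrix n).IsHermitian := by
  ext i j
  simp [centeringMatrix, one_apply, eq_comm]

theorem centeringMatrix_mul_self (n : ℕ) :
    centeringMatrix n * centeringMatrix n = centeringMatrix n := by
  ext i j
  have hn : (n : ℝ) ≠ 0 := Nat.cast_ne_zero.2 (Fin.pos i).ne'
  simp [centeringMatrix, mul_apply, one_apply, sub_mul, mul_sub, Finset.sum_sub_distrib, apply_ite]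
  field_simp
  simp

theorem centeringMatrix_posSemidef (n : ℕ) : (centeringMatrix n).PosSemidef := by
  simpa only [(centeringMatrix_isHermitian n).eq, centeringMatrix_mul_self] using
    posSemidef_conjTranspose_mul_self (centeringMatrix n)

theorem reduced_quadratic_posSemidef {n : ℕ}
    (α β : ℝ) (hα : 0 < α) (hβ : 0 < β)
    (u : Fin n → ℝ) (hu : ∀ i, 0 < u i)
    (L : Matrix (Fin n) (Fin n) ℝ) (hL : L.PosSemidef)
    (P : Matrix (Fin n) (Fin n) ℝ)
    (hP : P = ((α * β) • centeringMatrix n + Matrix.diagonal u + L)⁻¹) :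
    (centeringMatrix n * (1 - (α * β) • P) * centeringMatrix n).PosSemidef := by
  set c := α * β
  set H := centeringMatrix n
  set M := c • H + diagonal u + L
  have hc : 0 < c := mul_pos hα hβ
  have hM : M.PosDef :=
    .add_posSemidef (.posSemidef_add ((centeringMatrix_posSemidef n).smul hc.le) (.diagonal hu)) hL
  have hMH : (c⁻¹ • M - H).PosSemidef := by
    have : c⁻¹ • M - H = c⁻¹ • (diagonal u + L) := by
      simp only [M, smul_add, smul_smul, inv_mul_cancel₀ hc.ne', one_smul]
      abel
    rw [this]
    exact ((PosSemidef.diagonal fun i => (hu i).le).add hL).smul (inv_nonneg.2 hc.le)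
  have hinv : (c⁻¹ • M)⁻¹ = c • P := by
    refine hP ▸ inv_eq_left_inv ?_
    rw [Matrix.smul_mul, Matrix.mul_smul, smul_smul, mul_inv_cancel₀ hc.ne', one_smul,
      nonsing_inv_mul _ hM.det_pos.ne'.isUnit]
  have hschur :=
    (hM.smul (inv_pos.2 hc)).posSemidef_sub_mul_inv_mul (centeringMatrix_posSemidef n) hMH
  have hexpand : H * (1 - c • P) * H = H - H * (c • P) * H := by
    rw [Matrix.mul_sub, Matrix.mul_one, Matrix.sub_mul, centeringMatrix_mul_self]
  rwa [hexpand, ← hinv]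
end
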